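/- Let R be a commutative ring and let 𝓜, g, α, β, γ ∈ R. Let X, Y, Z be 2×2 matrices over R with det(X) = det(Y) = det(Z) = 1, X·Y·Z = T, tr(X) = −α, tr(Y) = −β, tr(Z) = −γ. Then ψ_g(Y·Z·Y⁻¹) = ψ_g(X)·ψ_g(Y) − S(γ) and ψ_g(Y⁻¹·X·Y) = ψ_g(Y)·ψ_g(Z) − S(α). -/

import Mathlib

open Matrix

/-- The lower-triangular matrix `L(u) = [[1,0],[u,1]]`. -/
def Lmat {R : Type*} [CommRing R] (u : R) : Matrix (Fin 2) (Fin 2) R :=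
  !![1, 0; u, 1]

/-- The matrix obtained from `A` by swapping its two diagonal entries. -/
def swapDiag {R : Type*} [CommRing R] (A : Matrix (Fin 2) (Fin 2) R) :
    Matrix (Fin 2) (Fin 2) R :=
  !![A 1 1, A 0 1; A 1 0, A 0 0]

/-- The map `ψ_g(A) = L(𝓜−g)·A'·L(g)`. -/
def psi {R : Type*} [CommRing R] (M g : R) (A : Matrix (Fin 2) (Fin 2) R) :
    Matrix (Fin 2) (Fin 2) R :=
  Lmat (M - g) * swapDiag A * Lmat g

/-- The matrix `S(k) = [[k, 0], [k·𝓜, k]]`. -/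
def Smat {R : Type*} [CommRing R] (M k : R) : Matrix (Fin 2) (Fin 2) R :=
  !![k, 0; k * M, k]

/-- The matrix `T = [[−1, 0], [𝓜, −1]]`. -/
def Tmat {R : Type*} [CommRing R] (M : R) : Matrix (Fin 2) (Fin 2) R :=
  !![-1, 0; M, -1]

/-!
Since `T = -L(𝓜)⁻¹`, the relation `X·Y·Z = T` gives `Z⁻¹ = -L(𝓜)·X·Y` and `X⁻¹ = -Y·Z·L(𝓜)`.
For a matrix of determinant one, Cayley–Hamilton reads `A + A⁻¹ = tr(A)·1`, hence
`Z = L(𝓜)·X·Y - γ·1` and `X = Y·Z·L(𝓜) - α·1`, so that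
`Y·Z·Y⁻¹ = Y·L(𝓜)·X - γ·1` and `Y⁻¹·X·Y = Z·L(𝓜)·Y - α·1`.
On the other hand `ψ_g` is additive, sends `k·1` to `S(k)`, and turns products into twisted
products in reverse order: `ψ_g(A)·ψ_g(B) = ψ_g(B·L(𝓜)·A)`.
-/

namespace Matrix

variable {R : Type*} [CommRing R]

theorem adjugate_fin_two_eq_trace_smul_one_sub (A : Matrix (Fin 2) (Fin 2) R) :
    adjugate A = A.trace • 1 - A := by
  ext i j
  fin_cases i <;> fin_cases j <;> simp [adjugate_fin_two, trace_fin_two]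

theorem inv_fin_two_eq_trace_smul_one_sub {A : Matrix (Fin 2) (Fin 2) R} (hA : A.det = 1) :
    A⁻¹ = A.trace • 1 - A := by
  rw [inv_def, hA, Ring.inverse_one, one_smul, adjugate_fin_two_eq_trace_smul_one_sub]

theorem eq_sub_smul_one_of_inv_eq_neg {A B : Matrix (Fin 2) (Fin 2) R} {s : R} (hA : A.det = 1)
    (htr : A.trace = -s) (hinv : A⁻¹ = -B) : A = B - s • 1 := by
  rw [inv_fin_two_eq_trace_smul_one_sub hA, htr, neg_smul, ← neg_add', neg_inj] at hinv
  rw [← hinv, add_sub_cancel_left]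

variable {n : Type*} [Fintype n] [DecidableEq n]

theorem mul_sub_smul_one_mul_inv {Y : Matrix n n R} (hY : IsUnit Y.det) (B : Matrix n n R)
    (s : R) : Y * (B * Y - s • 1) * Y⁻¹ = Y * B - s • 1 := by
  simp only [Matrix.mul_sub, Matrix.sub_mul, Matrix.mul_smul, Matrix.smul_mul, Matrix.mul_one,
    Matrix.mul_assoc, mul_nonsing_inv _ hY]

theorem inv_mul_sub_smul_one_mul {Y : Matrix n n R} (hY : IsUnit Y.det) (B : Matrix n n R)
    (s : R) : Y⁻¹ * (Y * B - s • 1) * Y = B * Y - s • 1 := by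
  simp only [Matrix.mul_sub, Matrix.sub_mul, Matrix.mul_smul, Matrix.smul_mul, Matrix.mul_one,
    ← Matrix.mul_assoc, nonsing_inv_mul _ hY, Matrix.one_mul]

end Matrix

section Psi

variable {R : Type*} [CommRing R]

theorem Lmat_mul_Lmat (a b : R) : Lmat a * Lmat b = Lmat (a + b) := by
  ext i j
  fin_cases i <;> fin_cases j <;> simp [Lmat]

theorem Lmat_mul_Tmat (M : R) : Lmat M * Tmat M = -1 := by
  ext i j
  fin_cases i <;> fin_cases j <;> simp [Lmat, Tmat]

theorem Tmat_mul_Lmat (M : R) : Tmat M * Lmat M = -1 := by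
  ext i j
  fin_cases i <;> fin_cases j <;> simp [Lmat, Tmat]

theorem swapDiag_mul_Lmat_mul_swapDiag (M : R) (A B : Matrix (Fin 2) (Fin 2) R) :
    swapDiag A * Lmat M * swapDiag B = swapDiag (B * Lmat M * A) := by
  ext i j
  fin_cases i <;> fin_cases j <;> simp [swapDiag, Lmat, mul_apply, Fin.sum_univ_two] <;> ring

theorem psi_mul_psi (M g : R) (A B : Matrix (Fin 2) (Fin 2) R) :
    psi M g A * psi M g B = psi M g (B * Lmat M * A) := by
  have hL : Lmat g * Lmat (M - g) = Lmat M := by rw [Lmat_mul_Lmat, add_sub_cancel]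
  rw [psi, psi, psi, ← swapDiag_mul_Lmat_mul_swapDiag, ← hL]
  simp only [Matrix.mul_assoc]

theorem psi_sub (M g : R) (A B : Matrix (Fin 2) (Fin 2) R) :
    psi M g (A - B) = psi M g A - psi M g B := by
  have hswap : swapDiag (A - B) = swapDiag A - swapDiag B := by
    ext i j
    fin_cases i <;> fin_cases j <;> simp [swapDiag]
  rw [psi, psi, psi, hswap, Matrix.mul_sub, Matrix.sub_mul]

theorem psi_smul_one (M g k : R) : psi M g (k • 1) = Smat M k := by
  ext i j
  fin_cases i <;> fin_cases j <;> simp [psi, swapDiag, Lmat, Smat]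
  ring

end Psi

theorem psi_generation_rule_general {R : Type*} [CommRing R] (M g α γ : R)
    (X Y Z : Matrix (Fin 2) (Fin 2) R)
    (hX : X.det = 1) (hY : Y.det = 1) (hZ : Z.det = 1)
    (hT : X * Y * Z = Tmat M)
    (htrX : X.trace = -α) (htrZ : Z.trace = -γ) :
    psi M g (Y * Z * Y⁻¹) = psi M g X * psi M g Y - Smat M γ ∧
    psi M g (Y⁻¹ * X * Y) = psi M g Y * psi M g Z - Smat M α := by
  have hYu : IsUnit Y.det := hY ▸ isUnit_one
  have hZ' : Z = Lmat M * X * Y - γ • 1 := eq_sub_smul_one_of_inv_eq_neg hZ htrZ <|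
    inv_eq_left_inv <| by
      rw [neg_mul, Matrix.mul_assoc, Matrix.mul_assoc, ← Matrix.mul_assoc X, hT, Lmat_mul_Tmat,
        neg_neg]
  have hX' : X = Y * (Z * Lmat M) - α • 1 := eq_sub_smul_one_of_inv_eq_neg hX htrX <|
    inv_eq_right_inv <| by
      rw [mul_neg, ← Matrix.mul_assoc, ← Matrix.mul_assoc, hT, Tmat_mul_Lmat, neg_neg]
  constructor
  · calc psi M g (Y * Z * Y⁻¹) = psi M g (Y * Lmat M * X - γ • 1) := by
          rw [hZ', mul_sub_smul_one_mul_inv hYu, Matrix.mul_assoc]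
      _ = _ := by rw [psi_sub, psi_smul_one, psi_mul_psi]
  · calc psi M g (Y⁻¹ * X * Y) = psi M g (Z * Lmat M * Y - α • 1) := by
          rw [hX', inv_mul_sub_smul_one_mul hYu]
      _ = _ := by rw [psi_sub, psi_smul_one, psi_mul_psi]

/-- `ψ_g` is compatible with the generation rules of the cluster Markov-monodromy
tree and the cluster generalized Cohn tree. -/
theorem psi_generation_rule {R : Type*} [CommRing R] (M g α β γ : R)
    (X Y Z : Matrix (Fin 2) (Fin 2) R)
    (hX : X.det = 1) (hY : Y.det = 1) (hZ : Z.det = 1)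
    (hT : X * Y * Z = Tmat M)
    (htrX : X.trace = -α) (htrY : Y.trace = -β) (htrZ : Z.trace = -γ) :
    psi M g (Y * Z * Y⁻¹) = psi M g X * psi M g Y - Smat M γ ∧
    psi M g (Y⁻¹ * X * Y) = psi M g Y * psi M g Z - Smat M α :=
  psi_generation_rule_general M g α γ X Y Z hX hY hZ hT htrX htrZ
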